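/- Let Φ be a smooth conformal immersion with Gauss map n and mean curvature H. Then the Gauss map satisfies Δn + |∇n|² n + 2∇H·∇Φ = 0, where ∇H·∇Φ = H_x Φ_x + H_y Φ_y. -/

import Mathlib

open Real MeasureTheory

noncomputable section

/-- Partial derivative in the first coordinate direction. -/
def pd1 {E : Type*} [NormedAddCommGroup E] [NormedSpace ℝ E]
    (f : ℝ × ℝ → E) : ℝ × ℝ → E := fun p => fderiv ℝ f p (1, 0)

/-- Partial derivative in the second coordinate direction. -/
def pd2 {E : Type*} [NormedAddCommGroup E] [NormedSpace ℝ E]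
    (f : ℝ × ℝ → E) : ℝ × ℝ → E := fun p => fderiv ℝ f p (0, 1)

/-- Euclidean dot product on ℝ³. -/
def dot3 (u v : Fin 3 → ℝ) : ℝ := ∑ i, u i * v i

/-- The unit disk in ℝ². -/
def D2 : Set (ℝ × ℝ) := Metric.ball (0 : ℝ × ℝ) 1

section auxiliary

lemma dot3_comm (u v : Fin 3 → ℝ) : dot3 u v = dot3 v u := by
  simp [dot3, Fin.sum_univ_three]; ring

lemma dot3_add_left (u v w : Fin 3 → ℝ) : dot3 (u + v) w = dot3 u w + dot3 v w := by
  simp [dot3, Fin.sum_univ_three]; ring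

lemma dot3_smul_left (r : ℝ) (u w : Fin 3 → ℝ) : dot3 (r • u) w = r * dot3 u w := by
  simp [dot3, Fin.sum_univ_three]; ring

lemma hasFDerivAt_proj {f : ℝ × ℝ → Fin 3 → ℝ} {p : ℝ × ℝ} (hf : DifferentiableAt ℝ f p)
    (i : Fin 3) : HasFDerivAt (fun q => f q i)
      ((ContinuousLinearMap.proj (R := ℝ) (φ := fun _ : Fin 3 => ℝ) i).comp (fderiv ℝ f p)) p :=
  (ContinuousLinearMap.proj (R := ℝ) (φ := fun _ : Fin 3 => ℝ)
    i).hasFDerivAt.comp p hf.hasFDerivAt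

lemma hasFDerivAt_dot3 {a b : ℝ × ℝ → Fin 3 → ℝ} {p : ℝ × ℝ} (ha : DifferentiableAt ℝ a p)
    (hb : DifferentiableAt ℝ b p) :
    HasFDerivAt (fun q => dot3 (a q) (b q))
      (∑ i : Fin 3, (a p i • (ContinuousLinearMap.proj (R := ℝ) (φ := fun _ : Fin 3 => ℝ) i).comp
        (fderiv ℝ b p) + b p i • (ContinuousLinearMap.proj (R := ℝ)
          (φ := fun _ : Fin 3 => ℝ) i).comp (fderiv ℝ a p))) p := by
  have h : ∀ i : Fin 3, HasFDerivAt (fun q => a q i * b q i)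
      (a p i • (ContinuousLinearMap.proj (R := ℝ) (φ := fun _ : Fin 3 => ℝ) i).comp
        (fderiv ℝ b p) + b p i • (ContinuousLinearMap.proj (R := ℝ)
          (φ := fun _ : Fin 3 => ℝ) i).comp (fderiv ℝ a p)) p :=
    fun i => (hasFDerivAt_proj ha i).mul (hasFDerivAt_proj hb i)
  exact HasFDerivAt.sum (fun i (_ : i ∈ Finset.univ) => h i)

lemma differentiableAt_dot3 {a b : ℝ × ℝ → Fin 3 → ℝ} {p : ℝ × ℝ} (ha : DifferentiableAt ℝ a p)
    (hb : DifferentiableAt ℝ b p) : DifferentiableAt ℝ (fun q => dot3 (a q) (b q)) p :=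
  (hasFDerivAt_dot3 ha hb).differentiableAt

lemma fderiv_dot3 {a b : ℝ × ℝ → Fin 3 → ℝ} {p : ℝ × ℝ} (ha : DifferentiableAt ℝ a p)
    (hb : DifferentiableAt ℝ b p) (v : ℝ × ℝ) :
    fderiv ℝ (fun q => dot3 (a q) (b q)) p v
      = dot3 (fderiv ℝ a p v) (b p) + dot3 (a p) (fderiv ℝ b p v) := by
  rw [(hasFDerivAt_dot3 ha hb).fderiv]
  simp only [ContinuousLinearMap.sum_apply, ContinuousLinearMap.add_apply,
    ContinuousLinearMap.smul_apply, ContinuousLinearMap.comp_apply,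
    ContinuousLinearMap.proj_apply, smul_eq_mul, Finset.sum_add_distrib, dot3]
  rw [add_comm]
  congr 1
  exact Finset.sum_congr rfl fun i _ => mul_comm _ _

lemma fderiv_congr_on {E : Type*} [NormedAddCommGroup E] [NormedSpace ℝ E]
    {f g : ℝ × ℝ → E} {U : Set (ℝ × ℝ)} (hU : IsOpen U) (h : ∀ q ∈ U, f q = g q)
    {p : ℝ × ℝ} (hp : p ∈ U) : fderiv ℝ f p = fderiv ℝ g p :=
  Filter.EventuallyEq.fderiv_eq (by
    filter_upwards [hU.mem_nhds hp] with q hq using h q hq)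

lemma contDiffAt_pd {f : ℝ × ℝ → Fin 3 → ℝ} {p : ℝ × ℝ} (hf : ContDiffAt ℝ (⊤ : ℕ∞) f p) (v : ℝ × ℝ) :
    ContDiffAt ℝ (⊤ : ℕ∞) (fun q => fderiv ℝ f q v) p := by
  have h1 : ContDiffAt ℝ (⊤ : ℕ∞) (fderiv ℝ f) p := hf.fderiv_right (by simp)
  exact (ContinuousLinearMap.apply ℝ (Fin 3 → ℝ) v).contDiff.contDiffAt.comp p h1

lemma contDiff_pd {f : ℝ × ℝ → Fin 3 → ℝ} (hf : ContDiff ℝ (⊤ : ℕ∞) f) (v : ℝ × ℝ) :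
    ContDiff ℝ (⊤ : ℕ∞) (fun q => fderiv ℝ f q v) := by
  have h1 : ContDiff ℝ (⊤ : ℕ∞) (fderiv ℝ f) := hf.fderiv_right (by simp)
  exact (ContinuousLinearMap.apply ℝ (Fin 3 → ℝ) v).contDiff.comp h1

lemma pd_symm {f : ℝ × ℝ → Fin 3 → ℝ} {p : ℝ × ℝ} (hf : ContDiffAt ℝ (⊤ : ℕ∞) f p) (v w : ℝ × ℝ) :
    fderiv ℝ (fun q => fderiv ℝ f q v) p w = fderiv ℝ (fun q => fderiv ℝ f q w) p v := by
  have hsymm := hf.isSymmSndFDerivAt (by rw [minSmoothness_of_isRCLikeNormedField]; exact WithTop.coe_le_coe.2 le_top)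
  have hd : DifferentiableAt ℝ (fderiv ℝ f) p :=
    (hf.fderiv_right (m := (⊤ : ℕ∞)) (by simp)).differentiableAt (by simp)
  have h1 : ∀ u : ℝ × ℝ, fderiv ℝ (fun q => fderiv ℝ f q u) p
      = (ContinuousLinearMap.apply ℝ (Fin 3 → ℝ) u).comp (fderiv ℝ (fderiv ℝ f) p) := by
    intro u
    exact ((ContinuousLinearMap.apply ℝ (Fin 3 → ℝ) u).hasFDerivAt.comp p hd.hasFDerivAt).fderiv
  rw [h1, h1]
  simp only [ContinuousLinearMap.comp_apply, ContinuousLinearMap.apply_apply]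
  exact hsymm w v

lemma dotted {x y nv w A : Fin 3 → ℝ} {μ a b c : ℝ}
    (h : μ • w = a • x + b • y + c • nv) :
    μ * dot3 w A = a * dot3 x A + b * dot3 y A + c * dot3 nv A := by
  have := congrArg (fun z => dot3 z A) h
  simpa [dot3_add_left, dot3_smul_left] using this

lemma dot3_smul_right (r : ℝ) (u w : Fin 3 → ℝ) : dot3 u (r • w) = r * dot3 u w := by
  simp [dot3, Fin.sum_univ_three]; ring

lemma contDiff_dot3 {a b : ℝ × ℝ → Fin 3 → ℝ} (ha : ContDiff ℝ (⊤ : ℕ∞) a) (hb : ContDiff ℝ (⊤ : ℕ∞) b) :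
    ContDiff ℝ (⊤ : ℕ∞) (fun q => dot3 (a q) (b q)) := by
  unfold dot3
  refine ContDiff.sum fun i _ => ContDiff.mul ?_ ?_
  · exact ((ContinuousLinearMap.proj (R := ℝ) (φ := fun _ : Fin 3 => ℝ) i).contDiff).comp ha
  · exact ((ContinuousLinearMap.proj (R := ℝ) (φ := fun _ : Fin 3 => ℝ) i).contDiff).comp hb

lemma lagrange3 (a b : Fin 3 → ℝ) : dot3 (crossProduct a b) (crossProduct a b)
    = dot3 a a * dot3 b b - (dot3 a b) ^ 2 := by
  simp [cross_apply, dot3, Fin.sum_univ_three]; ring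

lemma cross_dot_left (a b : Fin 3 → ℝ) : dot3 (crossProduct a b) a = 0 := by
  simp [cross_apply, dot3, Fin.sum_univ_three]; ring

lemma cross_dot_right (a b : Fin 3 → ℝ) : dot3 (crossProduct a b) b = 0 := by
  simp [cross_apply, dot3, Fin.sum_univ_three]; ring

lemma zero3 {x y nv u : Fin 3 → ℝ} {μ : ℝ} (hμ : μ ≠ 0)
    (hxx : dot3 x x = μ) (hyy : dot3 y y = μ) (hxy : dot3 x y = 0)
    (hnx : dot3 nv x = 0) (hny : dot3 nv y = 0) (hnn : dot3 nv nv = 1)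
    (hux : dot3 u x = 0) (huy : dot3 u y = 0) (hun : dot3 u nv = 0) :
    u = 0 := by
  simp only [dot3, Fin.sum_univ_three] at hxx hyy hxy hnx hny hnn hux huy hun
  set x0 := x 0; set x1 := x 1; set x2 := x 2
  set y0 := y 0; set y1 := y 1; set y2 := y 2
  set n0 := nv 0; set n1 := nv 1; set n2 := nv 2
  set u0 := u 0; set u1 := u 1; set u2 := u 2
  set c0 := x1*y2 - x2*y1 with hc0
  set c1 := x2*y0 - x0*y2 with hc1
  set c2 := x0*y1 - x1*y0 with hc2
  have hcc : c0^2 + c1^2 + c2^2 = μ^2 := by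
    rw [hc0, hc1, hc2]
    linear_combination (y0^2+y1^2+y2^2) * hxx + μ * hyy - (x0*y0+x1*y1+x2*y2) * hxy
  have E0 : u1*c2 - u2*c1 = 0 := by rw [hc1, hc2]; linear_combination x0 * huy - y0 * hux
  have E1 : u2*c0 - u0*c2 = 0 := by rw [hc0, hc2]; linear_combination x1 * huy - y1 * hux
  have E2 : u0*c1 - u1*c0 = 0 := by rw [hc0, hc1]; linear_combination x2 * huy - y2 * hux
  have N0 : n1*c2 - n2*c1 = 0 := by rw [hc1, hc2]; linear_combination x0 * hny - y0 * hnx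
  have N1 : n2*c0 - n0*c2 = 0 := by rw [hc0, hc2]; linear_combination x1 * hny - y1 * hnx
  have N2 : n0*c1 - n1*c0 = 0 := by rw [hc0, hc1]; linear_combination x2 * hny - y2 * hnx
  set cu := c0*u0 + c1*u1 + c2*u2 with hcu
  set cn := c0*n0 + c1*n1 + c2*n2 with hcnd
  have Ku0 : μ^2 * u0 = cu * c0 := by rw [hcu]; linear_combination c1 * E2 - c2 * E1 - u0 * hcc
  have Ku1 : μ^2 * u1 = cu * c1 := by rw [hcu]; linear_combination c2 * E0 - c0 * E2 - u1 * hcc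
  have Ku2 : μ^2 * u2 = cu * c2 := by rw [hcu]; linear_combination c0 * E1 - c1 * E0 - u2 * hcc
  have Kn0 : μ^2 * n0 = cn * c0 := by rw [hcnd]; linear_combination c1 * N2 - c2 * N1 - n0 * hcc
  have Kn1 : μ^2 * n1 = cn * c1 := by rw [hcnd]; linear_combination c2 * N0 - c0 * N2 - n1 * hcc
  have Kn2 : μ^2 * n2 = cn * c2 := by rw [hcnd]; linear_combination c0 * N1 - c1 * N0 - n2 * hcc
  have hcn2 : cn^2 = μ^2 := by
    linear_combination μ^2 * hnn - n0 * Kn0 - n1 * Kn1 - n2 * Kn2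
  have hcucn : cu * cn = 0 := by
    linear_combination μ^2 * hun - u0 * Kn0 - u1 * Kn1 - u2 * Kn2
  have hcn0 : cn ≠ 0 := fun h => hμ (by simpa [h, pow_eq_zero_iff] using hcn2.symm)
  have hcu0 : cu = 0 := by
    rcases mul_eq_zero.1 hcucn with h | h
    · exact h
    · exact absurd h hcn0
  have hμ2 : (μ:ℝ)^2 ≠ 0 := pow_ne_zero _ hμ
  funext i
  fin_cases i
  · show u0 = 0; have := Ku0; rw [hcu0] at this; simpa [hμ2] using this
  · show u1 = 0; have := Ku1; rw [hcu0] at this; simpa [hμ2] using this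
  · show u2 = 0; have := Ku2; rw [hcu0] at this; simpa [hμ2] using this

/-- expansion of a vector in the orthogonal frame, multiplied through by μ. -/
lemma expand3 {x y nv w : Fin 3 → ℝ} {μ : ℝ} (hμ : μ ≠ 0)
    (hxx : dot3 x x = μ) (hyy : dot3 y y = μ) (hxy : dot3 x y = 0)
    (hnx : dot3 nv x = 0) (hny : dot3 nv y = 0) (hnn : dot3 nv nv = 1) :
    μ • w = (dot3 w x) • x + (dot3 w y) • y + (μ * dot3 w nv) • nv := by
  have h := zero3 (u := μ • w - ((dot3 w x) • x + (dot3 w y) • y + (μ * dot3 w nv) • nv))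
    hμ hxx hyy hxy hnx hny hnn ?_ ?_ ?_
  · exact sub_eq_zero.mp h
  · simp only [dot3, Fin.sum_univ_three, Pi.sub_apply, Pi.add_apply, Pi.smul_apply,
      smul_eq_mul] at *
    linear_combination (-(w 0 * x 0 + w 1 * x 1 + w 2 * x 2)) * hxx
      - (w 0 * y 0 + w 1 * y 1 + w 2 * y 2) * hxy
      - μ * (w 0 * nv 0 + w 1 * nv 1 + w 2 * nv 2) * hnx
  · simp only [dot3, Fin.sum_univ_three, Pi.sub_apply, Pi.add_apply, Pi.smul_apply,
      smul_eq_mul] at *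
    linear_combination (-(w 0 * y 0 + w 1 * y 1 + w 2 * y 2)) * hyy
      - (w 0 * x 0 + w 1 * x 1 + w 2 * x 2) * hxy
      - μ * (w 0 * nv 0 + w 1 * nv 1 + w 2 * nv 2) * hny
  · simp only [dot3, Fin.sum_univ_three, Pi.sub_apply, Pi.add_apply, Pi.smul_apply,
      smul_eq_mul] at *
    linear_combination (-(w 0 * x 0 + w 1 * x 1 + w 2 * x 2)) * hnx
      - (w 0 * y 0 + w 1 * y 1 + w 2 * y 2) * hny
      - μ * (w 0 * nv 0 + w 1 * nv 1 + w 2 * nv 2) * hnn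

lemma core
    (Φ ν X Y P11 P12 P22 W1 W2 : ℝ × ℝ → Fin 3 → ℝ)
    (μf Ef Ff Gf Hc : ℝ × ℝ → ℝ)
    (U : Set (ℝ × ℝ)) (hU : IsOpen U)
    (hΦ : ContDiff ℝ (⊤ : ℕ∞) Φ)
    (hXd : X = fun q => fderiv ℝ Φ q (1, 0))
    (hYd : Y = fun q => fderiv ℝ Φ q (0, 1))
    (hP11d : P11 = fun q => fderiv ℝ X q (1, 0))
    (hP12d : P12 = fun q => fderiv ℝ X q (0, 1))
    (hP22d : P22 = fun q => fderiv ℝ Y q (0, 1))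
    (hW1d : W1 = fun q => fderiv ℝ ν q (1, 0))
    (hW2d : W2 = fun q => fderiv ℝ ν q (0, 1))
    (hμd : μf = fun q => dot3 (X q) (X q))
    (hEd : Ef = fun q => dot3 (P11 q) (ν q))
    (hFd : Ff = fun q => dot3 (P12 q) (ν q))
    (hGd : Gf = fun q => dot3 (P22 q) (ν q))
    (hνs : ∀ q ∈ U, ContDiffAt ℝ (⊤ : ℕ∞) ν q)
    (hνν : ∀ q ∈ U, dot3 (ν q) (ν q) = 1)
    (hνX : ∀ q ∈ U, dot3 (ν q) (X q) = 0)
    (hνY : ∀ q ∈ U, dot3 (ν q) (Y q) = 0)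
    (hYY : ∀ q ∈ U, dot3 (Y q) (Y q) = μf q)
    (hXY : ∀ q ∈ U, dot3 (X q) (Y q) = 0)
    (hpos : ∀ q ∈ U, 0 < μf q)
    (hHc : ∀ q ∈ U, 2 * μf q * Hc q = Ef q + Gf q)
    (hHcd : ∀ q ∈ U, DifferentiableAt ℝ Hc q)
    (p : ℝ × ℝ) (hp : p ∈ U) :
    fderiv ℝ W1 p (1, 0) + fderiv ℝ W2 p (0, 1)
      + (dot3 (W1 p) (W1 p) + dot3 (W2 p) (W2 p)) • ν p
      + (2 : ℝ) • (fderiv ℝ Hc p (1, 0) • X p + fderiv ℝ Hc p (0, 1) • Y p) = 0 := by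
  -- differentiability
  have hXs : ContDiff ℝ (⊤ : ℕ∞) X := hXd ▸ contDiff_pd hΦ _
  have hYs : ContDiff ℝ (⊤ : ℕ∞) Y := hYd ▸ contDiff_pd hΦ _
  have hP11s : ContDiff ℝ (⊤ : ℕ∞) P11 := hP11d ▸ contDiff_pd hXs _
  have hP12s : ContDiff ℝ (⊤ : ℕ∞) P12 := hP12d ▸ contDiff_pd hXs _
  have hP22s : ContDiff ℝ (⊤ : ℕ∞) P22 := hP22d ▸ contDiff_pd hYs _
  have hXdiff : ∀ q, DifferentiableAt ℝ X q := fun q => (hXs.differentiable (by simp)) q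
  have hYdiff : ∀ q, DifferentiableAt ℝ Y q := fun q => (hYs.differentiable (by simp)) q
  have hP11diff : ∀ q, DifferentiableAt ℝ P11 q := fun q => (hP11s.differentiable (by simp)) q
  have hP12diff : ∀ q, DifferentiableAt ℝ P12 q := fun q => (hP12s.differentiable (by simp)) q
  have hP22diff : ∀ q, DifferentiableAt ℝ P22 q := fun q => (hP22s.differentiable (by simp)) q
  have hνdiff : ∀ q ∈ U, DifferentiableAt ℝ ν q := fun q hq =>
    (hνs q hq).differentiableAt (by simp)
  have hW1s : ∀ q ∈ U, ContDiffAt ℝ (⊤ : ℕ∞) W1 q := fun q hq => hW1d ▸ contDiffAt_pd (hνs q hq) _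
  have hW2s : ∀ q ∈ U, ContDiffAt ℝ (⊤ : ℕ∞) W2 q := fun q hq => hW2d ▸ contDiffAt_pd (hνs q hq) _
  have hW1diff : ∀ q ∈ U, DifferentiableAt ℝ W1 q := fun q hq =>
    (hW1s q hq).differentiableAt (by simp)
  have hW2diff : ∀ q ∈ U, DifferentiableAt ℝ W2 q := fun q hq =>
    (hW2s q hq).differentiableAt (by simp)
  have hμdiff : ∀ q, DifferentiableAt ℝ μf q := fun q =>
    hμd ▸ differentiableAt_dot3 (hXdiff q) (hXdiff q)
  have hEdiff : ∀ q ∈ U, DifferentiableAt ℝ Ef q := fun q hq =>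
    hEd ▸ differentiableAt_dot3 (hP11diff q) (hνdiff q hq)
  have hFdiff : ∀ q ∈ U, DifferentiableAt ℝ Ff q := fun q hq =>
    hFd ▸ differentiableAt_dot3 (hP12diff q) (hνdiff q hq)
  have hGdiff : ∀ q ∈ U, DifferentiableAt ℝ Gf q := fun q hq =>
    hGd ▸ differentiableAt_dot3 (hP22diff q) (hνdiff q hq)
  -- pointwise rewriting of derivatives
  have hfX1 : ∀ q, fderiv ℝ X q (1, 0) = P11 q := fun q => by rw [hP11d]
  have hfX2 : ∀ q, fderiv ℝ X q (0, 1) = P12 q := fun q => by rw [hP12d]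
  have hfY2 : ∀ q, fderiv ℝ Y q (0, 1) = P22 q := fun q => by rw [hP22d]
  have hfY1 : ∀ q, fderiv ℝ Y q (1, 0) = P12 q := fun q => by
    rw [hYd, hP12d, hXd]; exact pd_symm hΦ.contDiffAt _ _
  have hfν1 : ∀ q, fderiv ℝ ν q (1, 0) = W1 q := fun q => by rw [hW1d]
  have hfν2 : ∀ q, fderiv ℝ ν q (0, 1) = W2 q := fun q => by rw [hW2d]
  -- first derivatives of the relations, on U
  have hDν : ∀ q ∈ U, ∀ v, dot3 (fderiv ℝ ν q v) (ν q) = 0 := by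
    intro q hq v
    have h0 := fderiv_congr_on (f := fun s => dot3 (ν s) (ν s)) (g := fun _ => (1 : ℝ))
      hU hνν hq
    have h1 := fderiv_dot3 (hνdiff q hq) (hνdiff q hq) v
    rw [h0] at h1
    simp only [fderiv_fun_const, Pi.zero_apply, ContinuousLinearMap.zero_apply] at h1
    have h2 := dot3_comm (ν q) (fderiv ℝ ν q v)
    linarith
  have hA1 : ∀ q ∈ U, dot3 (W1 q) (ν q) = 0 := fun q hq => by
    rw [hW1d]; exact hDν q hq _
  have hA2 : ∀ q ∈ U, dot3 (W2 q) (ν q) = 0 := fun q hq => by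
    rw [hW2d]; exact hDν q hq _
  have hW1X : ∀ q ∈ U, dot3 (W1 q) (X q) = - Ef q := by
    intro q hq
    have h0 := fderiv_congr_on (f := fun s => dot3 (ν s) (X s)) (g := fun _ => (0 : ℝ))
      hU hνX hq
    have h1 := fderiv_dot3 (hνdiff q hq) (hXdiff q) ((1 : ℝ), (0 : ℝ))
    rw [h0] at h1
    simp only [fderiv_fun_const, Pi.zero_apply, ContinuousLinearMap.zero_apply] at h1
    rw [hfν1 q, hfX1 q] at h1
    have h2 := dot3_comm (ν q) (P11 q)
    have h3 : Ef q = dot3 (P11 q) (ν q) := by rw [hEd]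
    linarith
  have hW2X : ∀ q ∈ U, dot3 (W2 q) (X q) = - Ff q := by
    intro q hq
    have h0 := fderiv_congr_on (f := fun s => dot3 (ν s) (X s)) (g := fun _ => (0 : ℝ))
      hU hνX hq
    have h1 := fderiv_dot3 (hνdiff q hq) (hXdiff q) ((0 : ℝ), (1 : ℝ))
    rw [h0] at h1
    simp only [fderiv_fun_const, Pi.zero_apply, ContinuousLinearMap.zero_apply] at h1
    rw [hfν2 q, hfX2 q] at h1
    have h2 := dot3_comm (ν q) (P12 q)
    have h3 : Ff q = dot3 (P12 q) (ν q) := by rw [hFd]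
    linarith
  have hW1Y : ∀ q ∈ U, dot3 (W1 q) (Y q) = - Ff q := by
    intro q hq
    have h0 := fderiv_congr_on (f := fun s => dot3 (ν s) (Y s)) (g := fun _ => (0 : ℝ))
      hU hνY hq
    have h1 := fderiv_dot3 (hνdiff q hq) (hYdiff q) ((1 : ℝ), (0 : ℝ))
    rw [h0] at h1
    simp only [fderiv_fun_const, Pi.zero_apply, ContinuousLinearMap.zero_apply] at h1
    rw [hfν1 q, hfY1 q] at h1
    have h2 := dot3_comm (ν q) (P12 q)
    have h3 : Ff q = dot3 (P12 q) (ν q) := by rw [hFd]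
    linarith
  have hW2Y : ∀ q ∈ U, dot3 (W2 q) (Y q) = - Gf q := by
    intro q hq
    have h0 := fderiv_congr_on (f := fun s => dot3 (ν s) (Y s)) (g := fun _ => (0 : ℝ))
      hU hνY hq
    have h1 := fderiv_dot3 (hνdiff q hq) (hYdiff q) ((0 : ℝ), (1 : ℝ))
    rw [h0] at h1
    simp only [fderiv_fun_const, Pi.zero_apply, ContinuousLinearMap.zero_apply] at h1
    rw [hfν2 q, hfY2 q] at h1
    have h2 := dot3_comm (ν q) (P22 q)
    have h3 : Gf q = dot3 (P22 q) (ν q) := by rw [hGd]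
    linarith
  -- frame facts at p
  have hxx : dot3 (X p) (X p) = μf p := by rw [hμd]
  have hyy : dot3 (Y p) (Y p) = μf p := hYY p hp
  have hxy : dot3 (X p) (Y p) = 0 := hXY p hp
  have hnx : dot3 (ν p) (X p) = 0 := hνX p hp
  have hny : dot3 (ν p) (Y p) = 0 := hνY p hp
  have hnn : dot3 (ν p) (ν p) = 1 := hνν p hp
  have hμne : μf p ≠ 0 := ne_of_gt (hpos p hp)
  have hyx : dot3 (Y p) (X p) = 0 := by rw [dot3_comm]; exact hxy
  -- Christoffel relations at p
  have hfμ : ∀ v, fderiv ℝ μf p v = dot3 (fderiv ℝ X p v) (X p) + dot3 (X p) (fderiv ℝ X p v) := by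
    intro v
    conv_lhs => rw [hμd]
    exact fderiv_dot3 (hXdiff p) (hXdiff p) v
  have hC1 : 2 * dot3 (X p) (P11 p) = fderiv ℝ μf p (1, 0) := by
    have := hfμ ((1 : ℝ), (0 : ℝ)); rw [hfX1 p] at this
    have h2 := dot3_comm (P11 p) (X p); linarith
  have hC2 : 2 * dot3 (X p) (P12 p) = fderiv ℝ μf p (0, 1) := by
    have := hfμ ((0 : ℝ), (1 : ℝ)); rw [hfX2 p] at this
    have h2 := dot3_comm (P12 p) (X p); linarith
  have hYYd : ∀ v, fderiv ℝ μf p v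
      = dot3 (fderiv ℝ Y p v) (Y p) + dot3 (Y p) (fderiv ℝ Y p v) := by
    intro v
    have h0 := fderiv_congr_on (f := fun s => dot3 (Y s) (Y s)) (g := μf) hU hYY hp
    have h1 := fderiv_dot3 (hYdiff p) (hYdiff p) v
    rw [h0] at h1
    linarith [h1]
  have hC3 : 2 * dot3 (Y p) (P12 p) = fderiv ℝ μf p (1, 0) := by
    have := hYYd ((1 : ℝ), (0 : ℝ)); rw [hfY1 p] at this
    have h2 := dot3_comm (P12 p) (Y p); linarith
  have hC4 : 2 * dot3 (Y p) (P22 p) = fderiv ℝ μf p (0, 1) := by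
    have := hYYd ((0 : ℝ), (1 : ℝ)); rw [hfY2 p] at this
    have h2 := dot3_comm (P22 p) (Y p); linarith
  have hXYd : ∀ v, dot3 (fderiv ℝ X p v) (Y p) + dot3 (X p) (fderiv ℝ Y p v) = 0 := by
    intro v
    have h0 := fderiv_congr_on (f := fun s => dot3 (X s) (Y s)) (g := fun _ => (0 : ℝ))
      hU hXY hp
    have h1 := fderiv_dot3 (hXdiff p) (hYdiff p) v
    rw [h0] at h1
    simp only [fderiv_fun_const, Pi.zero_apply, ContinuousLinearMap.zero_apply] at h1
    linarith
  have hC5 : dot3 (Y p) (P11 p) + dot3 (X p) (P12 p) = 0 := by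
    have h := hXYd ((1 : ℝ), (0 : ℝ)); rw [hfX1 p, hfY1 p] at h
    have h2 := dot3_comm (Y p) (P11 p); linarith
  have hC6 : dot3 (Y p) (P12 p) + dot3 (X p) (P22 p) = 0 := by
    have h := hXYd ((0 : ℝ), (1 : ℝ)); rw [hfX2 p, hfY2 p] at h
    have h2 := dot3_comm (Y p) (P12 p); linarith
  -- Weingarten at p
  have w1exp : μf p • W1 p = (- Ef p) • X p + (- Ff p) • Y p + (0 : ℝ) • ν p := by
    have h := expand3 (w := W1 p) hμne hxx hyy hxy hnx hny hnn
    rwa [hW1X p hp, hW1Y p hp, hA1 p hp, mul_zero] at h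
  have w2exp : μf p • W2 p = (- Ff p) • X p + (- Gf p) • Y p + (0 : ℝ) • ν p := by
    have h := expand3 (w := W2 p) hμne hxx hyy hxy hnx hny hnn
    rwa [hW2X p hp, hW2Y p hp, hA2 p hp, mul_zero] at h
  have w1P11 := dotted (A := P11 p) w1exp
  have w1P12 := dotted (A := P12 p) w1exp
  have w1P22 := dotted (A := P22 p) w1exp
  have w2P11 := dotted (A := P11 p) w2exp
  have w2P12 := dotted (A := P12 p) w2exp
  have w2P22 := dotted (A := P22 p) w2exp
  -- second derivatives of ν relations at p
  have hS1 : dot3 (fderiv ℝ W1 p (1, 0)) (X p) + dot3 (W1 p) (P11 p)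
      + fderiv ℝ Ef p (1, 0) = 0 := by
    have h0 := fderiv_congr_on (f := fun s => dot3 (W1 s) (X s)) (g := fun s => - Ef s)
      hU hW1X hp
    have h1 := fderiv_dot3 (hW1diff p hp) (hXdiff p) ((1 : ℝ), (0 : ℝ))
    rw [h0, fderiv_fun_neg] at h1
    simp only [ContinuousLinearMap.neg_apply] at h1
    rw [hfX1 p] at h1
    linarith
  have hS2 : dot3 (fderiv ℝ W2 p (0, 1)) (X p) + dot3 (W2 p) (P12 p)
      + fderiv ℝ Ff p (0, 1) = 0 := by
    have h0 := fderiv_congr_on (f := fun s => dot3 (W2 s) (X s)) (g := fun s => - Ff s)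
      hU hW2X hp
    have h1 := fderiv_dot3 (hW2diff p hp) (hXdiff p) ((0 : ℝ), (1 : ℝ))
    rw [h0, fderiv_fun_neg] at h1
    simp only [ContinuousLinearMap.neg_apply] at h1
    rw [hfX2 p] at h1
    linarith
  have hS3 : dot3 (fderiv ℝ W1 p (1, 0)) (Y p) + dot3 (W1 p) (P12 p)
      + fderiv ℝ Ff p (1, 0) = 0 := by
    have h0 := fderiv_congr_on (f := fun s => dot3 (W1 s) (Y s)) (g := fun s => - Ff s)
      hU hW1Y hp
    have h1 := fderiv_dot3 (hW1diff p hp) (hYdiff p) ((1 : ℝ), (0 : ℝ))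
    rw [h0, fderiv_fun_neg] at h1
    simp only [ContinuousLinearMap.neg_apply] at h1
    rw [hfY1 p] at h1
    linarith
  have hS4 : dot3 (fderiv ℝ W2 p (0, 1)) (Y p) + dot3 (W2 p) (P22 p)
      + fderiv ℝ Gf p (0, 1) = 0 := by
    have h0 := fderiv_congr_on (f := fun s => dot3 (W2 s) (Y s)) (g := fun s => - Gf s)
      hU hW2Y hp
    have h1 := fderiv_dot3 (hW2diff p hp) (hYdiff p) ((0 : ℝ), (1 : ℝ))
    rw [h0, fderiv_fun_neg] at h1
    simp only [ContinuousLinearMap.neg_apply] at h1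
    rw [hfY2 p] at h1
    linarith
  have hS5 : dot3 (fderiv ℝ W1 p (1, 0)) (ν p) + dot3 (W1 p) (W1 p) = 0 := by
    have h0 := fderiv_congr_on (f := fun s => dot3 (W1 s) (ν s)) (g := fun _ => (0 : ℝ))
      hU hA1 hp
    have h1 := fderiv_dot3 (hW1diff p hp) (hνdiff p hp) ((1 : ℝ), (0 : ℝ))
    rw [h0] at h1
    simp only [fderiv_fun_const, Pi.zero_apply, ContinuousLinearMap.zero_apply] at h1
    rw [hfν1 p] at h1
    linarith
  have hS6 : dot3 (fderiv ℝ W2 p (0, 1)) (ν p) + dot3 (W2 p) (W2 p) = 0 := by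
    have h0 := fderiv_congr_on (f := fun s => dot3 (W2 s) (ν s)) (g := fun _ => (0 : ℝ))
      hU hA2 hp
    have h1 := fderiv_dot3 (hW2diff p hp) (hνdiff p hp) ((0 : ℝ), (1 : ℝ))
    rw [h0] at h1
    simp only [fderiv_fun_const, Pi.zero_apply, ContinuousLinearMap.zero_apply] at h1
    rw [hfν2 p] at h1
    linarith
  -- derivatives of E, F, G at p
  have hDE1 := fderiv_dot3 (hP11diff p) (hνdiff p hp) ((1 : ℝ), (0 : ℝ))
  rw [← hEd, hfν1 p] at hDE1
  have hDE2 := fderiv_dot3 (hP11diff p) (hνdiff p hp) ((0 : ℝ), (1 : ℝ))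
  rw [← hEd, hfν2 p] at hDE2
  have hDF1 := fderiv_dot3 (hP12diff p) (hνdiff p hp) ((1 : ℝ), (0 : ℝ))
  rw [← hFd, hfν1 p] at hDF1
  have hDF2 := fderiv_dot3 (hP12diff p) (hνdiff p hp) ((0 : ℝ), (1 : ℝ))
  rw [← hFd, hfν2 p] at hDF2
  have hDG1 := fderiv_dot3 (hP22diff p) (hνdiff p hp) ((1 : ℝ), (0 : ℝ))
  rw [← hGd, hfν1 p] at hDG1
  have hDG2 := fderiv_dot3 (hP22diff p) (hνdiff p hp) ((0 : ℝ), (1 : ℝ))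
  rw [← hGd, hfν2 p] at hDG2
  -- third derivative symmetries
  have hT1 : fderiv ℝ P22 p (1, 0) = fderiv ℝ P12 p (0, 1) := by
    have hfun : (fun q => fderiv ℝ Y q ((1 : ℝ), (0 : ℝ))) = P12 := funext fun q => hfY1 q
    calc fderiv ℝ P22 p (1, 0)
        = fderiv ℝ (fun q => fderiv ℝ Y q (0, 1)) p (1, 0) := by rw [hP22d]
      _ = fderiv ℝ (fun q => fderiv ℝ Y q (1, 0)) p (0, 1) := pd_symm hYs.contDiffAt _ _
      _ = fderiv ℝ P12 p (0, 1) := by rw [hfun]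
  have hT2 : fderiv ℝ P11 p (0, 1) = fderiv ℝ P12 p (1, 0) := by
    rw [hP11d, hP12d]; exact pd_symm hXs.contDiffAt _ _
  have hT1' : dot3 (fderiv ℝ P22 p (1, 0)) (ν p) = dot3 (fderiv ℝ P12 p (0, 1)) (ν p) := by
    rw [hT1]
  have hT2' : dot3 (fderiv ℝ P11 p (0, 1)) (ν p) = dot3 (fderiv ℝ P12 p (1, 0)) (ν p) := by
    rw [hT2]
  -- derivative of the mean curvature relation
  have hrel : ∀ q ∈ U, μf q * Hc q = (1 / 2 : ℝ) * (Ef q + Gf q) := by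
    intro q hq; have := hHc q hq; linarith
  have hH : ∀ v : ℝ × ℝ, μf p * fderiv ℝ Hc p v + Hc p * fderiv ℝ μf p v
      = (1 / 2 : ℝ) * (fderiv ℝ Ef p v + fderiv ℝ Gf p v) := by
    intro v
    have h0 := fderiv_congr_on (f := fun s => μf s * Hc s)
      (g := fun s => (1 / 2 : ℝ) * (Ef s + Gf s)) hU hrel hp
    have h1 := fderiv_fun_mul (hμdiff p) (hHcd p hp)
    have h2 := fderiv_const_mul ((hEdiff p hp).fun_add (hGdiff p hp)) (1 / 2 : ℝ)
    have h3 := fderiv_fun_add (hEdiff p hp) (hGdiff p hp)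
    have e0 : fderiv ℝ (fun s => μf s * Hc s) p v
        = fderiv ℝ (fun s => (1 / 2 : ℝ) * (Ef s + Gf s)) p v := by rw [h0]
    rw [h1, h2, h3] at e0
    simp only [ContinuousLinearMap.add_apply, ContinuousLinearMap.smul_apply,
      smul_eq_mul] at e0
    linarith
  have hH1 := hH ((1 : ℝ), (0 : ℝ))
  have hH2 := hH ((0 : ℝ), (1 : ℝ))
  have hHcp := hHc p hp
  -- commutation glue
  have hk1 : dot3 (P22 p) (W1 p) = dot3 (W1 p) (P22 p) := dot3_comm _ _
  have hk2 : dot3 (P12 p) (W2 p) = dot3 (W2 p) (P12 p) := dot3_comm _ _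
  have hk3 : dot3 (P11 p) (W2 p) = dot3 (W2 p) (P11 p) := dot3_comm _ _
  have hk4 : dot3 (P12 p) (W1 p) = dot3 (W1 p) (P12 p) := dot3_comm _ _
  have hxn : dot3 (X p) (ν p) = 0 := by rw [dot3_comm]; exact hnx
  have hyn : dot3 (Y p) (ν p) = 0 := by rw [dot3_comm]; exact hny
  -- final assembly
  refine zero3 hμne hxx hyy hxy hnx hny hnn ?_ ?_ ?_
  · -- dot with X
    simp only [dot3_add_left, dot3_smul_left]
    refine mul_left_cancel₀ hμne ?_
    linear_combination (μf p * (dot3 (W1 p) (W1 p) + dot3 (W2 p) (W2 p))) * hnx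
      + (2 * μf p * fderiv ℝ Hc p (0, 1)) * hyx
      + (2 * μf p * fderiv ℝ Hc p (1, 0)) * hxx
      + μf p * hS1 + μf p * hS2 + (2 * μf p) * hH1
      + μf p * hDG1 - μf p * hDF2 + μf p * hT1' + μf p * hk1 - μf p * hk2
      - w1P11 + w1P22 - 2 * w2P12
      + (Ef p / 2) * hC1 + Ff p * hC5 - Ef p * hC6 + (Ff p / 2) * hC2
      + (Ef p / 2 + Gf p) * hC3 - (Ff p / 2) * hC4
      - fderiv ℝ μf p (1, 0) * hHcp
  · -- dot with Y
    simp only [dot3_add_left, dot3_smul_left]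
    refine mul_left_cancel₀ hμne ?_
    linear_combination (μf p * (dot3 (W1 p) (W1 p) + dot3 (W2 p) (W2 p))) * hny
      + (2 * μf p * fderiv ℝ Hc p (1, 0)) * hxy
      + (2 * μf p * fderiv ℝ Hc p (0, 1)) * hyy
      + μf p * hS3 + μf p * hS4 + (2 * μf p) * hH2
      + μf p * hDE2 - μf p * hDF1 + μf p * hT2' + μf p * hk3 - μf p * hk4
      - 2 * w1P12 + w2P11 - w2P22
      + (Ef p + Gf p / 2) * hC2 + (Ff p / 2) * hC3 - (Ff p / 2) * hC1
      - Gf p * hC5 + Ff p * hC6 + (Gf p / 2) * hC4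
      - fderiv ℝ μf p (0, 1) * hHcp
  · -- dot with ν
    simp only [dot3_add_left, dot3_smul_left]
    linear_combination hS5 + hS6
      + (dot3 (W1 p) (W1 p) + dot3 (W2 p) (W2 p)) * hnn
      + (2 * fderiv ℝ Hc p (1, 0)) * hxn + (2 * fderiv ℝ Hc p (0, 1)) * hyn

end auxiliary

theorem stmt7
    (Φ : ℝ × ℝ → Fin 3 → ℝ) (lam : ℝ × ℝ → ℝ) (n : ℝ × ℝ → Fin 3 → ℝ)
    (e f g H : ℝ × ℝ → ℝ)
    (hΦ : ContDiff ℝ (⊤ : ℕ∞) Φ)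
    (hconf : ∀ p ∈ D2,
      dot3 (pd1 Φ p) (pd2 Φ p) = 0 ∧
      dot3 (pd1 Φ p) (pd1 Φ p) = Real.exp (2 * lam p) ∧
      dot3 (pd2 Φ p) (pd2 Φ p) = Real.exp (2 * lam p))
    (hn : ∀ p ∈ D2,
      n p = (Real.sqrt (dot3 (crossProduct (pd1 Φ p) (pd2 Φ p))
          (crossProduct (pd1 Φ p) (pd2 Φ p))))⁻¹ •
        crossProduct (pd1 Φ p) (pd2 Φ p))
    (he : ∀ p ∈ D2, e p = dot3 (pd1 (pd1 Φ) p) (n p))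
    (hf : ∀ p ∈ D2, f p = dot3 (pd2 (pd1 Φ) p) (n p))
    (hg : ∀ p ∈ D2, g p = dot3 (pd2 (pd2 Φ) p) (n p))
    (hH : ∀ p ∈ D2, H p = (e p + g p) / (2 * Real.exp (2 * lam p))) :
    ∀ p ∈ D2,
      pd1 (pd1 n) p + pd2 (pd2 n) p
        + (dot3 (pd1 n p) (pd1 n p) + dot3 (pd2 n p) (pd2 n p)) • n p
        + (2 : ℝ) • ((pd1 H p) • pd1 Φ p + (pd2 H p) • pd2 Φ p) = 0 := by
  intro p hp
  simp only [pd1, pd2] at hconf hn he hg hH ⊢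
  rw [show pd1 Φ = (fun q => fderiv ℝ Φ q (1, 0)) from rfl] at he
  rw [show pd2 Φ = (fun q => fderiv ℝ Φ q (0, 1)) from rfl] at hg
  have hU : IsOpen D2 := Metric.isOpen_ball
  have hXs : ContDiff ℝ (⊤ : ℕ∞) (fun q : ℝ × ℝ => fderiv ℝ Φ q (1, 0)) := contDiff_pd hΦ _
  have hYs : ContDiff ℝ (⊤ : ℕ∞) (fun q : ℝ × ℝ => fderiv ℝ Φ q (0, 1)) := contDiff_pd hΦ _
  have hXi : ∀ i : Fin 3, ContDiff ℝ (⊤ : ℕ∞) (fun q : ℝ × ℝ => fderiv ℝ Φ q (1, 0) i) := fun i =>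
    ((ContinuousLinearMap.proj (R := ℝ) (φ := fun _ : Fin 3 => ℝ) i).contDiff).comp hXs
  have hYi : ∀ i : Fin 3, ContDiff ℝ (⊤ : ℕ∞) (fun q : ℝ × ℝ => fderiv ℝ Φ q (0, 1) i) := fun i =>
    ((ContinuousLinearMap.proj (R := ℝ) (φ := fun _ : Fin 3 => ℝ) i).contDiff).comp hYs
  have hcs : ContDiff ℝ (⊤ : ℕ∞) (fun q : ℝ × ℝ =>
      crossProduct (fderiv ℝ Φ q (1, 0)) (fderiv ℝ Φ q (0, 1))) := by
    have hrw : (fun q : ℝ × ℝ => crossProduct (fderiv ℝ Φ q (1, 0)) (fderiv ℝ Φ q (0, 1)))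
        = fun q => ![fderiv ℝ Φ q (1,0) 1 * fderiv ℝ Φ q (0,1) 2
            - fderiv ℝ Φ q (1,0) 2 * fderiv ℝ Φ q (0,1) 1,
          fderiv ℝ Φ q (1,0) 2 * fderiv ℝ Φ q (0,1) 0
            - fderiv ℝ Φ q (1,0) 0 * fderiv ℝ Φ q (0,1) 2,
          fderiv ℝ Φ q (1,0) 0 * fderiv ℝ Φ q (0,1) 1
            - fderiv ℝ Φ q (1,0) 1 * fderiv ℝ Φ q (0,1) 0] :=
      funext fun q => cross_apply _ _
    rw [hrw]
    refine contDiff_pi.2 fun i => ?_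
    fin_cases i
    · simpa using ((hXi 1).mul (hYi 2)).sub ((hXi 2).mul (hYi 1))
    · simpa using ((hXi 2).mul (hYi 0)).sub ((hXi 0).mul (hYi 2))
    · simpa using ((hXi 0).mul (hYi 1)).sub ((hXi 1).mul (hYi 0))
  have hdcc : ContDiff ℝ (⊤ : ℕ∞) (fun q : ℝ × ℝ =>
      dot3 (crossProduct (fderiv ℝ Φ q (1, 0)) (fderiv ℝ Φ q (0, 1)))
        (crossProduct (fderiv ℝ Φ q (1, 0)) (fderiv ℝ Φ q (0, 1)))) := contDiff_dot3 hcs hcs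
  -- value of |cross|²
  have hcc : ∀ q ∈ D2, dot3 (crossProduct (fderiv ℝ Φ q (1, 0)) (fderiv ℝ Φ q (0, 1)))
      (crossProduct (fderiv ℝ Φ q (1, 0)) (fderiv ℝ Φ q (0, 1)))
        = Real.exp (2 * lam q) ^ 2 := by
    intro q hq
    obtain ⟨h1, h2, h3⟩ := hconf q hq
    rw [lagrange3, h1, h2, h3]; ring
  have hsq : ∀ q ∈ D2, Real.sqrt (dot3 (crossProduct (fderiv ℝ Φ q (1, 0))
      (fderiv ℝ Φ q (0, 1))) (crossProduct (fderiv ℝ Φ q (1, 0)) (fderiv ℝ Φ q (0, 1))))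
        = Real.exp (2 * lam q) := by
    intro q hq
    rw [hcc q hq]
    exact Real.sqrt_sq (Real.exp_pos _).le
  -- smoothness of n on D2
  have hνs : ∀ q ∈ D2, ContDiffAt ℝ (⊤ : ℕ∞) n q := by
    intro q hq
    have hne : dot3 (crossProduct (fderiv ℝ Φ q (1, 0)) (fderiv ℝ Φ q (0, 1)))
        (crossProduct (fderiv ℝ Φ q (1, 0)) (fderiv ℝ Φ q (0, 1))) ≠ 0 := by
      rw [hcc q hq]; positivity
    have hsne : Real.sqrt (dot3 (crossProduct (fderiv ℝ Φ q (1, 0)) (fderiv ℝ Φ q (0, 1)))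
        (crossProduct (fderiv ℝ Φ q (1, 0)) (fderiv ℝ Φ q (0, 1)))) ≠ 0 := by
      rw [hsq q hq]; exact Real.exp_ne_zero _
    have hNs : ContDiffAt ℝ (⊤ : ℕ∞) (fun s : ℝ × ℝ =>
        (Real.sqrt (dot3 (crossProduct (fderiv ℝ Φ s (1, 0)) (fderiv ℝ Φ s (0, 1)))
          (crossProduct (fderiv ℝ Φ s (1, 0)) (fderiv ℝ Φ s (0, 1)))))⁻¹ •
            crossProduct (fderiv ℝ Φ s (1, 0)) (fderiv ℝ Φ s (0, 1))) q := by
      refine ContDiffAt.fun_smul ?_ hcs.contDiffAt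
      exact ((Real.contDiffAt_sqrt hne).comp q hdcc.contDiffAt).inv hsne
    exact hNs.congr_of_eventuallyEq (by
      filter_upwards [hU.mem_nhds hq] with s hs using hn s hs)
  -- pointwise relations for n
  have hνν : ∀ q ∈ D2, dot3 (n q) (n q) = 1 := by
    intro q hq
    rw [hn q hq, dot3_smul_left, dot3_smul_right, hsq q hq, hcc q hq]
    have h := Real.exp_ne_zero (2 * lam q)
    field_simp
  have hνX : ∀ q ∈ D2, dot3 (n q) (fderiv ℝ Φ q (1, 0)) = 0 := by
    intro q hq
    rw [hn q hq, dot3_smul_left, cross_dot_left, mul_zero]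
  have hνY : ∀ q ∈ D2, dot3 (n q) (fderiv ℝ Φ q (0, 1)) = 0 := by
    intro q hq
    rw [hn q hq, dot3_smul_left, cross_dot_right, mul_zero]
  have hYY : ∀ q ∈ D2, dot3 (fderiv ℝ Φ q (0, 1)) (fderiv ℝ Φ q (0, 1))
      = dot3 (fderiv ℝ Φ q (1, 0)) (fderiv ℝ Φ q (1, 0)) := by
    intro q hq
    rw [(hconf q hq).2.2, (hconf q hq).2.1]
  have hXY : ∀ q ∈ D2, dot3 (fderiv ℝ Φ q (1, 0)) (fderiv ℝ Φ q (0, 1)) = 0 :=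
    fun q hq => (hconf q hq).1
  have hpos : ∀ q ∈ D2, 0 < dot3 (fderiv ℝ Φ q (1, 0)) (fderiv ℝ Φ q (1, 0)) := by
    intro q hq
    rw [(hconf q hq).2.1]; exact Real.exp_pos _
  -- mean curvature relation
  have hHc : ∀ q ∈ D2, 2 * dot3 (fderiv ℝ Φ q (1, 0)) (fderiv ℝ Φ q (1, 0)) * H q
      = dot3 (fderiv ℝ (fun s => fderiv ℝ Φ s (1, 0)) q (1, 0)) (n q)
        + dot3 (fderiv ℝ (fun s => fderiv ℝ Φ s (0, 1)) q (0, 1)) (n q) := by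
    intro q hq
    rw [hH q hq, (hconf q hq).2.1, ← he q hq, ← hg q hq]
    field_simp
  -- differentiability of H on D2
  have hP11s : ContDiff ℝ (⊤ : ℕ∞) (fun q : ℝ × ℝ =>
      fderiv ℝ (fun s => fderiv ℝ Φ s (1, 0)) q (1, 0)) := contDiff_pd hXs _
  have hP22s : ContDiff ℝ (⊤ : ℕ∞) (fun q : ℝ × ℝ =>
      fderiv ℝ (fun s => fderiv ℝ Φ s (0, 1)) q (0, 1)) := contDiff_pd hYs _
  have hHcd : ∀ q ∈ D2, DifferentiableAt ℝ H q := by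
    intro q hq
    have hHloc : ∀ s ∈ D2, H s
        = (dot3 (fderiv ℝ (fun t => fderiv ℝ Φ t (1, 0)) s (1, 0)) (n s)
          + dot3 (fderiv ℝ (fun t => fderiv ℝ Φ t (0, 1)) s (0, 1)) (n s))
            / (2 * dot3 (fderiv ℝ Φ s (1, 0)) (fderiv ℝ Φ s (1, 0))) := by
      intro s hs
      rw [hH s hs, he s hs, hg s hs, (hconf s hs).2.1]
    have hdE : DifferentiableAt ℝ (fun s => dot3 (fderiv ℝ (fun t => fderiv ℝ Φ t (1, 0)) s
        (1, 0)) (n s)) q :=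
      differentiableAt_dot3 ((hP11s.differentiable (by simp)) q)
        ((hνs q hq).differentiableAt (by simp))
    have hdG : DifferentiableAt ℝ (fun s => dot3 (fderiv ℝ (fun t => fderiv ℝ Φ t (0, 1)) s
        (0, 1)) (n s)) q :=
      differentiableAt_dot3 ((hP22s.differentiable (by simp)) q)
        ((hνs q hq).differentiableAt (by simp))
    have hdμ : DifferentiableAt ℝ (fun s => dot3 (fderiv ℝ Φ s (1, 0))
        (fderiv ℝ Φ s (1, 0))) q :=
      differentiableAt_dot3 ((hXs.differentiable (by simp)) q) ((hXs.differentiable (by simp)) q)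
    have hne : 2 * dot3 (fderiv ℝ Φ q (1, 0)) (fderiv ℝ Φ q (1, 0)) ≠ 0 := by
      have := hpos q hq; positivity
    have hd2μ : DifferentiableAt ℝ (fun s => 2 * dot3 (fderiv ℝ Φ s (1, 0))
        (fderiv ℝ Φ s (1, 0))) q := hdμ.const_mul 2
    have hdq : DifferentiableAt ℝ (fun s =>
        (dot3 (fderiv ℝ (fun t => fderiv ℝ Φ t (1, 0)) s (1, 0)) (n s)
          + dot3 (fderiv ℝ (fun t => fderiv ℝ Φ t (0, 1)) s (0, 1)) (n s))
        / (2 * dot3 (fderiv ℝ Φ s (1, 0)) (fderiv ℝ Φ s (1, 0)))) q :=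
      by exact ((hdE.add hdG).mul (hd2μ.inv hne))
    refine DifferentiableAt.congr_of_eventuallyEq hdq ?_
    filter_upwards [hU.mem_nhds hq] with s hs using hHloc s hs
  exact core Φ n _ _ _ _ _ _ _ _ _ _ _ H D2 hU hΦ rfl rfl rfl rfl rfl rfl rfl rfl rfl rfl rfl
    hνs hνν hνX hνY hYY hXY hpos hHc hHcd p hp

end
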